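/- arXiv:2211.08775 — 8 statements merged into one kernel-verified Lean document; each statement's English description precedes it below -/
import Mathlib

section
/- For ε > 0 and ρ > 0, the anisotropic proximity operator associated with h(q) = ρ(e^{q/ρ} − 1) (the Legendre transform of the KL entropy with parameter ρ) is the linear map aprox_h(p) = (1 + ε/ρ)^{-1} · p. -/
open Real

/-- For `ε, ρ > 0`, the anisotropic proximity operator associated with
`h(q) = ρ(e^{q/ρ} − 1)` (the Legendre transform of the KL entropy) is the linear map
`p ↦ (1 + ε/ρ)⁻¹ p`: it is the unique minimizer of `q ↦ ε e^{(p−q)/ε} + h(q)`. -/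
theorem aprox_KL (ε ρ : ℝ) (hε : 0 < ε) (hρ : 0 < ρ) (p : ℝ) :
    ∀ q : ℝ,
      ε * Real.exp ((p - (1 + ε / ρ)⁻¹ * p) / ε) + ρ * (Real.exp ((1 + ε / ρ)⁻¹ * p / ρ) - 1)
        ≤ ε * Real.exp ((p - q) / ε) + ρ * (Real.exp (q / ρ) - 1) ∧
      (q ≠ (1 + ε / ρ)⁻¹ * p →
        ε * Real.exp ((p - (1 + ε / ρ)⁻¹ * p) / ε) + ρ * (Real.exp ((1 + ε / ρ)⁻¹ * p / ρ) - 1)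
          < ε * Real.exp ((p - q) / ε) + ρ * (Real.exp (q / ρ) - 1)) := by
  intro q
  have hs : (0:ℝ) < ε + ρ := by linarith
  have hsne : (ε + ρ) ≠ 0 := ne_of_gt hs
  have hεne : ε ≠ 0 := ne_of_gt hε
  have hρne : ρ ≠ 0 := ne_of_gt hρ
  have hqstar : (1 + ε / ρ)⁻¹ * p = ρ * p / (ε + ρ) := by
    rw [inv_mul_eq_div, div_eq_div_iff (by positivity) hsne]
    field_simp
    ring
  have h1 : (p - ρ * p / (ε + ρ)) / ε = p / (ε + ρ) := by
    field_simp
    ring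
  have h2 : (ρ * p / (ε + ρ)) / ρ = p / (ε + ρ)  := by
    field_simp
  have hmin : ε * Real.exp ((p - (1 + ε / ρ)⁻¹ * p) / ε)
      + ρ * (Real.exp ((1 + ε / ρ)⁻¹ * p / ρ) - 1)
      = (ε + ρ) * Real.exp (p / (ε + ρ)) - ρ := by
    rw [hqstar, h1, h2]; ring
  set a := (p - q) / ε with ha
  set b := q / ρ with hb
  have hw1 : 0 < ε / (ε + ρ) := by positivity
  have hw2 : 0 < ρ / (ε + ρ) := by positivity
  have hwsum : ε / (ε + ρ) + ρ / (ε + ρ) = 1 := by field_simp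
  have hcomb : (ε / (ε + ρ)) • a + (ρ / (ε + ρ)) • b = p / (ε + ρ) := by
    simp only [smul_eq_mul, ha, hb]
    field_simp
    ring
  constructor
  · have := convexOn_exp.2 (Set.mem_univ a) (Set.mem_univ b) hw1.le hw2.le hwsum
    rw [hcomb] at this
    simp only [smul_eq_mul] at this
    have h3 := mul_le_mul_of_nonneg_left this hs.le
    rw [hmin]
    have : (ε + ρ) * (ε / (ε + ρ) * Real.exp a + ρ / (ε + ρ) * Real.exp b)
        = ε * Real.exp a + ρ * Real.exp b := by field_simp
    nlinarith [h3]
  · intro hq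
    have hab : a ≠ b := by
      intro h
      apply hq
      rw [hqstar]
      have : ρ * (p - q) = ε * q := by
        rw [ha, hb, div_eq_div_iff hεne hρne] at h
        linarith
      field_simp
      linarith
    have := strictConvexOn_exp.2 (Set.mem_univ a) (Set.mem_univ b) hab hw1 hw2 hwsum
    rw [hcomb] at this
    simp only [smul_eq_mul] at this
    have h3 := mul_lt_mul_of_pos_left this hs
    rw [hmin]
    have : (ε + ρ) * (ε / (ε + ρ) * Real.exp a + ρ / (ε + ρ) * Real.exp b)
        = ε * Real.exp a + ρ * Real.exp b := by field_simp
    nlinarith [h3]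
end

section
/- For ε > 0 and ρ > 0, the anisotropic proximity operator associated with h(q) = max(−ρ, q) restricted to dom = (−∞, ρ] (the Legendre transform of the TV entropy) is the clamping map aprox_h(p) = min(max(p, −ρ), ρ). -/
/-!
The objective `F q = ε e^{(p-q)/ε} + max(-ρ, q)` is convex, so the clamp `c` minimizes it
over `(-∞, ρ]` as soon as the slope `g = e^{(p-c)/ε}` of the exponential term at `c` is a
subgradient of `h = max(-ρ, ·)` at `c` relative to `(-∞, ρ]`. This holds because `g - 1` has
the sign of `p - c`: at an interior clamp `c = p` we get `g = 1`, the slope of `h`; at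
`c = -ρ ≥ p` we get `g ≤ 1`; and at the right endpoint `c = ρ ≤ p` any `g ≥ 1` will do.
-/

open Real

theorem exp_mul_sub_add_one_le_exp (x y : ℝ) : exp y * (x - y + 1) ≤ exp x :=
  calc exp y * (x - y + 1) ≤ exp y * exp (x - y) :=
        mul_le_mul_of_nonneg_left (add_one_le_exp _) (exp_pos y).le
    _ = exp x := by rw [← exp_add, add_sub_cancel]

theorem mul_exp_div_add_mul_sub_le {ε : ℝ} (hε : 0 < ε) (p c q : ℝ) :
    ε * exp ((p - c) / ε) + exp ((p - c) / ε) * (c - q) ≤ ε * exp ((p - q) / ε) := by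
  have hslope : ε * ((p - q) / ε - (p - c) / ε + 1) = c - q + ε := by
    field_simp
    ring
  calc ε * exp ((p - c) / ε) + exp ((p - c) / ε) * (c - q)
      = ε * (exp ((p - c) / ε) * ((p - q) / ε - (p - c) / ε + 1)) := by
        rw [mul_left_comm, hslope]
        ring
    _ ≤ ε * exp ((p - q) / ε) :=
        mul_le_mul_of_nonneg_left (exp_mul_sub_add_one_le_exp _ _) hε.le

theorem max_neg_clamp_le_add_mul_sub {ρ p q g : ℝ} (hq : q ≤ ρ) (hg : 0 ≤ g)
    (hg_le : p ≤ min (max p (-ρ)) ρ → g ≤ 1)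
    (hg_ge : min (max p (-ρ)) ρ ≤ p → 1 ≤ g) :
    max (-ρ) (min (max p (-ρ)) ρ) ≤ max (-ρ) q + g * (min (max p (-ρ)) ρ - q) := by
  have hq₁ : -ρ ≤ max (-ρ) q := le_max_left _ _
  have hq₂ : q ≤ max (-ρ) q := le_max_right _ _
  rcases le_total (max p (-ρ)) ρ with hρ | hρ
  · rw [min_eq_left hρ] at *
    rcases le_total p (-ρ) with hp | hp
    · rw [max_eq_right hp, max_self] at *
      have hg₁ := hg_le hp
      rcases le_total q (-ρ) with hq' | hq' <;> nlinarith
    · rw [max_eq_left hp, max_eq_right hp] at *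
      nlinarith [hg_le le_rfl, hg_ge le_rfl]
  · rw [min_eq_right hρ] at *
    refine max_le (by nlinarith) ?_
    rcases le_max_iff.mp hρ with hp | hρ_nonpos
    · nlinarith [hg_ge hp]
    · nlinarith

theorem aprox_TV_general (ε ρ : ℝ) (hε : 0 < ε) (p : ℝ) :
    min (max p (-ρ)) ρ ≤ ρ ∧
    ∀ q : ℝ, q ≤ ρ →
      ε * Real.exp ((p - min (max p (-ρ)) ρ) / ε) + max (-ρ) (min (max p (-ρ)) ρ)
        ≤ ε * Real.exp ((p - q) / ε) + max (-ρ) q := by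
  refine ⟨min_le_right _ _, fun q hq => ?_⟩
  set c := min (max p (-ρ)) ρ
  have hsubgradient : max (-ρ) c ≤ max (-ρ) q + exp ((p - c) / ε) * (c - q) :=
    max_neg_clamp_le_add_mul_sub hq (exp_pos _).le
      (fun hpc => exp_le_one_iff.mpr (div_nonpos_of_nonpos_of_nonneg (by linarith) hε.le))
      (fun hcp => one_le_exp (div_nonneg (by linarith) hε.le))
  linarith [mul_exp_div_add_mul_sub_le hε p c q]

/-- For `ε, ρ > 0`, the anisotropic proximity operator associated with
`h(q) = max(−ρ, q)` on the domain `(−∞, ρ]` (the Legendre transform of the TV entropy)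
is the clamping map `p ↦ min(max(p, −ρ), ρ)`: the clamp lies in the domain and
minimizes `q ↦ ε e^{(p−q)/ε} + h(q)` over the domain. -/
theorem aprox_TV (ε ρ : ℝ) (hε : 0 < ε) (hρ : 0 < ρ) (p : ℝ) :
    min (max p (-ρ)) ρ ≤ ρ ∧
    ∀ q : ℝ, q ≤ ρ →
      ε * Real.exp ((p - min (max p (-ρ)) ρ) / ε) + max (-ρ) (min (max p (-ρ)) ρ)
        ≤ ε * Real.exp ((p - q) / ε) + max (-ρ) q :=
  aprox_TV_general ε ρ hε p
end

section
/- For any ε > 0 and any convex function h : ℝ → ℝ ∪ {+∞} (proper, lower-semicontinuous), the anisotropic proximity operator aprox_h is 1-Lipschitz (non-expansive): |aprox_h(p) − aprox_h(p')| ≤ |p − p'| for all p, p'. -/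
open Real Set

/-- Key lemma: if `A p' < A p` then `p' < p` and `A p - A p' ≤ p - p'`. -/
lemma aprox_key
    (ε : ℝ) (hε : 0 < ε)
    (s : Set ℝ) (hs : Convex ℝ s)
    (h : ℝ → ℝ) (hconv : ConvexOn ℝ s h)
    (A : ℝ → ℝ)
    (hA : ∀ p : ℝ, A p ∈ s ∧
      ∀ q ∈ s, q ≠ A p →
        ε * Real.exp ((p - A p) / ε) + h (A p) < ε * Real.exp ((p - q) / ε) + h q)
    (p p' : ℝ) (hlt : A p' < A p) : p' < p ∧ A p - A p' ≤ p - p' := by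
  set q := A p with hq
  set q' := A p' with hq'
  obtain ⟨hqs, hopt⟩ := hA p
  obtain ⟨hq's, hopt'⟩ := hA p'
  -- Step 1: p' < p
  have H1 := hopt q' hq's (by exact ne_of_lt hlt)
  have H2 := hopt' q hqs (by exact ne_of_gt hlt)
  have e1 : Real.exp ((p - q) / ε) = Real.exp (p / ε) * Real.exp (-(q / ε)) := by
    rw [← Real.exp_add]; congr 1; field_simp; ring
  have e2 : Real.exp ((p' - q') / ε) = Real.exp (p' / ε) * Real.exp (-(q' / ε)) := by
    rw [← Real.exp_add]; congr 1; field_simp; ring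
  have e3 : Real.exp ((p - q') / ε) = Real.exp (p / ε) * Real.exp (-(q' / ε)) := by
    rw [← Real.exp_add]; congr 1; field_simp; ring
  have e4 : Real.exp ((p' - q) / ε) = Real.exp (p' / ε) * Real.exp (-(q / ε)) := by
    rw [← Real.exp_add]; congr 1; field_simp; ring
  have hsum : Real.exp (p / ε) * Real.exp (-(q / ε)) +
      Real.exp (p' / ε) * Real.exp (-(q' / ε)) <
      Real.exp (p / ε) * Real.exp (-(q' / ε)) +
      Real.exp (p' / ε) * Real.exp (-(q / ε)) := by
    rw [e1, e3] at H1; rw [e2, e4] at H2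
    nlinarith [H1, H2, hε]
  have hUV : Real.exp (-(q / ε)) < Real.exp (-(q' / ε)) := by
    apply Real.exp_lt_exp.mpr
    have : q' / ε < q / ε := by
      apply div_lt_div_of_pos_right hlt hε
    linarith
  have hXY : Real.exp (p' / ε) < Real.exp (p / ε) := by
    nlinarith [hsum, hUV]
  have hpp' : p' < p := by
    have h2 := Real.exp_lt_exp.mp hXY
    have h3 := mul_lt_mul_of_pos_right h2 hε
    rw [div_mul_cancel₀ _ hε.ne', div_mul_cancel₀ _ hε.ne'] at h3
    exact h3
  refine ⟨hpp', ?_⟩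
  -- Step 2: A p - A p' ≤ p - p'
  by_contra hcon
  push_neg at hcon
  have hδ : 0 < p - p' := by linarith
  have hqq' : 0 < q - q' := by linarith
  set lam : ℝ := (p - p') / (q - q') with hlam
  have hlam0 : 0 < lam := div_pos hδ hqq'
  have hlam1 : lam < 1 := (div_lt_one hqq').mpr (by linarith)
  have hlamval : lam * (q - q') = p - p' := by
    rw [hlam]; field_simp
  set r : ℝ := q - (p - p') with hrdef
  set r' : ℝ := q' + (p - p') with hr'def
  have hrval : lam * q' + (1 - lam) * q = r := by
    rw [hrdef]; linear_combination -hlamval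
  have hr'val : (1 - lam) * q' + lam * q = r' := by
    rw [hr'def]; linear_combination hlamval
  have hrs : r ∈ s := by
    have := hs hq's hqs hlam0.le (by linarith : (0:ℝ) ≤ 1 - lam) (by ring)
    rw [← hrval]; simpa only [smul_eq_mul] using this
  have hr's : r' ∈ s := by
    have := hs hq's hqs (by linarith : (0:ℝ) ≤ 1 - lam) hlam0.le (by ring)
    rw [← hr'val]; simpa only [smul_eq_mul] using this
  have hrne : r ≠ q' := by
    intro heq
    rw [hrdef] at heq
    have : q - q' = p - p' := by linarith
    linarith
  have hr'ne : r' ≠ q := by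
    intro heq
    rw [hr'def] at heq
    have : q - q' = p - p' := by linarith
    linarith
  have G1 := hopt r' hr's hr'ne
  have G2 := hopt' r hrs hrne
  have a1 : (p - r') / ε = (p' - q') / ε := by rw [hr'def]; ring_nf
  have a2 : (p' - r) / ε = (p - q) / ε := by rw [hrdef]; ring_nf
  rw [a1] at G1
  rw [a2] at G2
  -- so h q + h q' < h r + h r'
  have hsum2 : h q + h q' < h r + h r' := by linarith
  -- convexity
  have c1 : h r ≤ lam * h q' + (1 - lam) * h q := by
    have := hconv.2 hq's hqs hlam0.le (by linarith : (0:ℝ) ≤ 1 - lam) (by ring)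
    rw [← hrval]; simpa only [smul_eq_mul] using this
  have c2 : h r' ≤ (1 - lam) * h q' + lam * h q := by
    have := hconv.2 hq's hqs (by linarith : (0:ℝ) ≤ 1 - lam) hlam0.le (by ring)
    rw [← hr'val]; simpa only [smul_eq_mul] using this
  nlinarith [hsum2, c1, c2]

/-- For `ε > 0` and a proper convex lower-semicontinuous function `h` (modeled by a
convex function on a closed convex domain `s ⊆ ℝ`, `+∞` outside), the anisotropic
proximity operator `A p = argmin_{q ∈ s} [ε e^{(p−q)/ε} + h(q)]` (assumed to exist
and be unique for every `p`) is non-expansive: `|A p − A p'| ≤ |p − p'|`. -/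
theorem aprox_nonexpansive
    (ε : ℝ) (hε : 0 < ε)
    (s : Set ℝ) (hs : Convex ℝ s) (hsc : IsClosed s) (hsne : s.Nonempty)
    (h : ℝ → ℝ) (hconv : ConvexOn ℝ s h) (hlsc : LowerSemicontinuousOn h s)
    (A : ℝ → ℝ)
    (hA : ∀ p : ℝ, A p ∈ s ∧
      ∀ q ∈ s, q ≠ A p →
        ε * Real.exp ((p - A p) / ε) + h (A p) < ε * Real.exp ((p - q) / ε) + h q) :
    ∀ p p' : ℝ, |A p - A p'| ≤ |p - p'| := by
  intro p p'
  rcases lt_trichotomy (A p') (A p) with hlt | heq | hgt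
  · obtain ⟨h1, h2⟩ := aprox_key ε hε s hs h hconv A hA p p' hlt
    rw [abs_of_pos (by linarith), abs_of_pos (by linarith)]
    exact h2
  · rw [heq]; simp [abs_nonneg]
  · obtain ⟨h1, h2⟩ := aprox_key ε hε s hs h hconv A hA p' p hgt
    rw [abs_of_neg (by linarith), abs_of_neg (by linarith)]
    linarith
end

section
/- For discrete measures α = Σᵢ αᵢ δ_{xᵢ} and β = Σⱼ βⱼ δ_{yⱼ} with KL marginal penalties of parameters ρ₁, ρ₂ > 0, the optimal translation λ*(f,g) = argmax_λ D_ε(f + λ, g − λ) of the dual UOT functional admits the closed form λ*(f,g) = (ρ₁ρ₂/(ρ₁ + ρ₂)) · log( ⟨α, e^{−f/ρ₁}⟩ / ⟨β, e^{−g/ρ₂}⟩ ). -/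
open Real Finset

/-- Closed form of the optimal translation for the entropic UOT dual with KL marginal
penalties: with `D_ε(f,g) = −Σᵢ ρ₁(e^{−fᵢ/ρ₁}−1)αᵢ − Σⱼ ρ₂(e^{−gⱼ/ρ₂}−1)βⱼ
− ε Σᵢⱼ (e^{(fᵢ+gⱼ−Cᵢⱼ)/ε}−1)αᵢβⱼ`, the translation
`λ* = (ρ₁ρ₂/(ρ₁+ρ₂)) log(⟨α, e^{−f/ρ₁}⟩ / ⟨β, e^{−g/ρ₂}⟩)` maximizes
`λ ↦ D_ε(f+λ, g−λ)`, and strictly so away from `λ*`. -/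
theorem optimal_translation_KL
    {N M : ℕ} (α : Fin N → ℝ) (β : Fin M → ℝ)
    (hα : ∀ i, 0 ≤ α i) (hβ : ∀ j, 0 ≤ β j)
    (hαm : 0 < ∑ i, α i) (hβm : 0 < ∑ j, β j)
    (C : Fin N → Fin M → ℝ) (f : Fin N → ℝ) (g : Fin M → ℝ)
    (ε ρ₁ ρ₂ : ℝ) (hε : 0 < ε) (hρ₁ : 0 < ρ₁) (hρ₂ : 0 < ρ₂)
    (D : (Fin N → ℝ) → (Fin M → ℝ) → ℝ)
    (hD : ∀ f' g', D f' g' =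
      -(∑ i, ρ₁ * (Real.exp (-(f' i) / ρ₁) - 1) * α i)
      - (∑ j, ρ₂ * (Real.exp (-(g' j) / ρ₂) - 1) * β j)
      - ε * ∑ i, ∑ j, (Real.exp ((f' i + g' j - C i j) / ε) - 1) * α i * β j)
    (lam : ℝ)
    (hlam : lam = (ρ₁ * ρ₂ / (ρ₁ + ρ₂)) *
      Real.log ((∑ i, α i * Real.exp (-(f i) / ρ₁)) / (∑ j, β j * Real.exp (-(g j) / ρ₂)))) :
    ∀ t : ℝ,
      D (fun i => f i + t) (fun j => g j - t) ≤ D (fun i => f i + lam) (fun j => g j - lam) ∧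
      (t ≠ lam →
        D (fun i => f i + t) (fun j => g j - t) < D (fun i => f i + lam) (fun j => g j - lam)) := by
  set A : ℝ := ∑ i, α i * Real.exp (-(f i) / ρ₁) with hA
  set B : ℝ := ∑ j, β j * Real.exp (-(g j) / ρ₂) with hB
  have hApos : 0 < A := by
    obtain ⟨i, -, hi⟩ := Finset.exists_lt_of_sum_lt (f := fun _ : Fin N => (0:ℝ)) (g := α)
      (by simpa using hαm)
    exact Finset.sum_pos' (fun k _ => mul_nonneg (hα k) (Real.exp_pos _).le)
      ⟨i, Finset.mem_univ i, mul_pos hi (Real.exp_pos _)⟩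
  have hBpos : 0 < B := by
    obtain ⟨j, -, hj⟩ := Finset.exists_lt_of_sum_lt (f := fun _ : Fin M => (0:ℝ)) (g := β)
      (by simpa using hβm)
    exact Finset.sum_pos' (fun k _ => mul_nonneg (hβ k) (Real.exp_pos _).le)
      ⟨j, Finset.mem_univ j, mul_pos hj (Real.exp_pos _)⟩
  -- The key balance equation at lam
  have hkey : A * Real.exp (-lam / ρ₁) = B * Real.exp (lam / ρ₂) := by
    have hlog : lam / ρ₁ + lam / ρ₂ = Real.log A - Real.log B := by
      rw [hlam, ← Real.log_div (ne_of_gt hApos) (ne_of_gt hBpos)]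
      field_simp
      ring
    have h1 : A * Real.exp (-lam / ρ₁) = Real.exp (Real.log A + -lam / ρ₁) := by
      rw [Real.exp_add, Real.exp_log hApos]
    have h2 : B * Real.exp (lam / ρ₂) = Real.exp (Real.log B + lam / ρ₂) := by
      rw [Real.exp_add, Real.exp_log hBpos]
    rw [h1, h2]
    congr 1
    have hh : -lam / ρ₁ = -(lam / ρ₁) := by ring
    rw [hh]
    linarith [hlog]
  -- Rewrite D along the translation
  have hDt : ∀ t : ℝ, D (fun i => f i + t) (fun j => g j - t)
      = ρ₁ * ∑ i, α i + ρ₂ * ∑ j, β j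
        - ε * ∑ i, ∑ j, (Real.exp ((f i + g j - C i j) / ε) - 1) * α i * β j
        - (ρ₁ * Real.exp (-t / ρ₁) * A + ρ₂ * Real.exp (t / ρ₂) * B) := by
    intro t
    rw [hD]
    have e1 : ∑ i, ρ₁ * (Real.exp (-(f i + t) / ρ₁) - 1) * α i
        = ρ₁ * Real.exp (-t / ρ₁) * A - ρ₁ * ∑ i, α i := by
      rw [hA, Finset.mul_sum, Finset.mul_sum, ← Finset.sum_sub_distrib]
      refine Finset.sum_congr rfl fun i _ => ?_
      rw [show -(f i + t) / ρ₁ = -t / ρ₁ + -(f i) / ρ₁ by ring, Real.exp_add]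
      ring
    have e2 : ∑ j, ρ₂ * (Real.exp (-(g j - t) / ρ₂) - 1) * β j
        = ρ₂ * Real.exp (t / ρ₂) * B - ρ₂ * ∑ j, β j := by
      rw [hB, Finset.mul_sum, Finset.mul_sum, ← Finset.sum_sub_distrib]
      refine Finset.sum_congr rfl fun j _ => ?_
      rw [show -(g j - t) / ρ₂ = t / ρ₂ + -(g j) / ρ₂ by ring, Real.exp_add]
      ring
    have e3 : ∀ i j, (f i + t + (g j - t) - C i j) / ε = (f i + g j - C i j) / ε := by
      intro i j; ring
    simp only [e3] at *
    rw [e1, e2]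
    ring
  -- Main comparison
  intro t
  have hcpos : 0 < A * Real.exp (-lam / ρ₁) := by positivity
  set s : ℝ := t - lam with hs
  have ht1 : Real.exp (-t / ρ₁) * A = A * Real.exp (-lam / ρ₁) * Real.exp (-s / ρ₁) := by
    rw [mul_assoc, ← Real.exp_add, show -lam / ρ₁ + -s / ρ₁ = -t / ρ₁ by rw [hs]; ring]; ring
  have ht2 : Real.exp (t / ρ₂) * B = A * Real.exp (-lam / ρ₁) * Real.exp (s / ρ₂) := by
    rw [hkey, mul_assoc, ← Real.exp_add, show lam / ρ₂ + s / ρ₂ = t / ρ₂ by rw [hs]; ring]; ring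
  have hl1 : Real.exp (-lam / ρ₁) * A = A * Real.exp (-lam / ρ₁) := by ring
  have hl2 : Real.exp (lam / ρ₂) * B = A * Real.exp (-lam / ρ₁) := by rw [hkey]; ring
  have hineq : ∀ s : ℝ, 0 ≤ ρ₁ * (Real.exp (-s / ρ₁) - 1) + ρ₂ * (Real.exp (s / ρ₂) - 1) := by
    intro s
    have a1 : ρ₁ * (-s / ρ₁) = -s := by field_simp
    have a2 : ρ₂ * (s / ρ₂) = s := by field_simp
    have b1 := mul_le_mul_of_nonneg_left (Real.add_one_le_exp (-s / ρ₁)) hρ₁.le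
    have b2 := mul_le_mul_of_nonneg_left (Real.add_one_le_exp (s / ρ₂)) hρ₂.le
    nlinarith [a1, a2, b1, b2]
  have hineq' : s ≠ 0 → 0 < ρ₁ * (Real.exp (-s / ρ₁) - 1) + ρ₂ * (Real.exp (s / ρ₂) - 1) := by
    intro hs0
    have h1 : -s / ρ₁ + 1 < Real.exp (-s / ρ₁) :=
      Real.add_one_lt_exp (by simp [div_eq_zero_iff, hρ₁.ne', hs0, neg_eq_zero])
    have h2 : s / ρ₂ + 1 < Real.exp (s / ρ₂) :=
      Real.add_one_lt_exp (by simp [div_eq_zero_iff, hρ₂.ne', hs0])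
    have a1 : ρ₁ * (-s / ρ₁) = -s := by field_simp
    have a2 : ρ₂ * (s / ρ₂) = s := by field_simp
    nlinarith [a1, a2, mul_lt_mul_of_pos_left h1 hρ₁, mul_lt_mul_of_pos_left h2 hρ₂]
  have E : ρ₁ * Real.exp (-t / ρ₁) * A + ρ₂ * Real.exp (t / ρ₂) * B
      - (ρ₁ * Real.exp (-lam / ρ₁) * A + ρ₂ * Real.exp (lam / ρ₂) * B)
      = (A * Real.exp (-lam / ρ₁)) *
        (ρ₁ * (Real.exp (-s / ρ₁) - 1) + ρ₂ * (Real.exp (s / ρ₂) - 1)) := by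
    linear_combination ρ₁ * ht1 + ρ₂ * ht2 + ρ₂ * hkey
  constructor
  · rw [hDt t, hDt lam]
    have := mul_nonneg hcpos.le (hineq s)
    linarith [E]
  · intro htne
    have hs0 : s ≠ 0 := sub_ne_zero_of_ne htne
    rw [hDt t, hDt lam]
    have := mul_pos hcpos (hineq' hs0)
    linarith [E]
end

section
/- For KL marginal penalties with equal parameters ρ₁ = ρ₂ = ρ and ε = 0, the translation-invariant dual functional satisfies H₀(f,g) = sup_λ D₀(f + λ, g − λ) = ρ[ m(α) + m(β) − 2√( ⟨α, e^{−f/ρ}⟩ · ⟨β, e^{−g/ρ}⟩ ) ]. -/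
/-!
Translating `(f, g)` by `(t, -t)` turns `D₀` into `ρ (m(α) + m(β)) - ρ (A e^{-t/ρ} + B e^{t/ρ})`
with `A = ⟨α, e^{-f/ρ}⟩` and `B = ⟨β, e^{-g/ρ}⟩`. By AM-GM the bracket is at least `2 √(AB)`,
with equality at `e^{t/ρ} = √(A/B)` when `A, B > 0`. If `A` or `B` vanishes, the infimum
`2 √(AB) = 0` is only approached as `t → ∓∞`, so the supremum need not be attained.
-/

open Real Finset

theorem two_mul_sqrt_mul_le_mul_exp_neg_add_mul_exp {A B : ℝ} (hA : 0 ≤ A) (hB : 0 ≤ B)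
    (s : ℝ) : 2 * √(A * B) ≤ A * exp (-s) + B * exp s := by
  have hprod : A * exp (-s) * (B * exp s) = A * B := by
    rw [mul_mul_mul_comm, ← exp_add, neg_add_cancel, exp_zero, mul_one]
  calc 2 * √(A * B) = 2 * √(A * exp (-s)) * √(B * exp s) := by
        rw [mul_assoc, ← sqrt_mul (by positivity), hprod]
    _ ≤ √(A * exp (-s)) ^ 2 + √(B * exp s) ^ 2 := two_mul_le_add_sq _ _
    _ = A * exp (-s) + B * exp s := by rw [sq_sqrt (by positivity), sq_sqrt (by positivity)]

theorem isGLB_range_mul_exp_neg_add_mul_exp {A B : ℝ} (hA : 0 ≤ A) (hB : 0 ≤ B) :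
    IsGLB (Set.range fun s => A * exp (-s) + B * exp s) (2 * √(A * B)) := by
  rcases hA.eq_or_lt with rfl | hA
  · simp only [zero_mul, zero_add, sqrt_zero, mul_zero]
    refine isGLB_of_tendsto_atBot (exp_monotone.const_mul hB) ?_
    simpa using tendsto_exp_atBot.const_mul B
  rcases hB.eq_or_lt with rfl | hB
  · simp only [zero_mul, add_zero, mul_zero, sqrt_zero]
    refine isGLB_of_tendsto_atTop (fun x y hxy => by gcongr) ?_
    simpa using tendsto_exp_neg_atTop_nhds_zero.const_mul A
  refine IsLeast.isGLB ⟨⟨log (√A / √B), ?_⟩, fun _ ⟨s, hs⟩ => hs ▸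
    two_mul_sqrt_mul_le_mul_exp_neg_add_mul_exp hA.le hB.le s⟩
  have hA' := sqrt_pos.2 hA
  have hB' := sqrt_pos.2 hB
  show A * exp (-log _) + B * exp (log _) = _
  rw [exp_neg, exp_log (div_pos hA' hB'), sqrt_mul hA.le]
  field_simp
  rw [sq_sqrt hA.le, sq_sqrt hB.le]
  ring

theorem IsGLB.isLUB_range_const_sub_mul {ι : Type*} {F : ι → ℝ} {a : ℝ}
    (h : IsGLB (Set.range F) a) (c : ℝ) {ρ : ℝ} (hρ : 0 < ρ) :
    IsLUB (Set.range fun i => c - ρ * F i) (c - ρ * a) := by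
  refine ⟨?_, fun b hb => ?_⟩
  · rintro _ ⟨i, rfl⟩
    exact sub_le_sub_left (mul_le_mul_of_nonneg_left (h.1 ⟨i, rfl⟩) hρ.le) c
  · have hlb : (c - b) / ρ ∈ lowerBounds (Set.range F) := by
      rintro _ ⟨i, rfl⟩
      have := hb ⟨i, rfl⟩
      rw [div_le_iff₀ hρ]
      linarith
    have := h.2 hlb
    rw [div_le_iff₀ hρ] at this
    linarith

theorem sum_exp_neg_add_div_sub_one_mul {ι : Type*} [Fintype ι] (w φ : ι → ℝ) (ρ t : ℝ) :
    ∑ i, (exp (-(φ i + t) / ρ) - 1) * w i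
      = (∑ i, w i * exp (-φ i / ρ)) * exp (-(t / ρ)) - ∑ i, w i := by
  rw [sum_mul, ← sum_sub_distrib]
  refine sum_congr rfl fun i _ => ?_
  rw [neg_add, add_div, exp_add, neg_div ρ t]
  ring

/-- For KL marginal penalties with `ρ₁ = ρ₂ = ρ` and `ε = 0`, the translation-invariant
dual functional `H₀(f,g) = sup_λ D₀(f+λ, g−λ)`, where
`D₀(f,g) = −ρΣᵢ(e^{−fᵢ/ρ}−1)αᵢ − ρΣⱼ(e^{−gⱼ/ρ}−1)βⱼ`, equals
`ρ[m(α) + m(β) − 2√(⟨α, e^{−f/ρ}⟩ ⟨β, e^{−g/ρ}⟩)]`. -/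
theorem ti_dual_functional_eps_zero
    {N M : ℕ} (α : Fin N → ℝ) (β : Fin M → ℝ)
    (hα : ∀ i, 0 ≤ α i) (hβ : ∀ j, 0 ≤ β j)
    (ρ : ℝ) (hρ : 0 < ρ)
    (f : Fin N → ℝ) (g : Fin M → ℝ)
    (D : (Fin N → ℝ) → (Fin M → ℝ) → ℝ)
    (hD : ∀ f' g', D f' g' =
      -(ρ * ∑ i, (Real.exp (-(f' i) / ρ) - 1) * α i)
      - ρ * ∑ j, (Real.exp (-(g' j) / ρ) - 1) * β j) :
    IsLUB {v : ℝ | ∃ t : ℝ, v = D (fun i => f i + t) (fun j => g j - t)}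
      (ρ * ((∑ i, α i) + (∑ j, β j)
        - 2 * Real.sqrt ((∑ i, α i * Real.exp (-(f i) / ρ))
            * (∑ j, β j * Real.exp (-(g j) / ρ))))) := by
  set A := ∑ i, α i * exp (-(f i) / ρ)
  set B := ∑ j, β j * exp (-(g j) / ρ)
  have hA : 0 ≤ A := sum_nonneg fun i _ => mul_nonneg (hα i) (exp_pos _).le
  have hB : 0 ≤ B := sum_nonneg fun j _ => mul_nonneg (hβ j) (exp_pos _).le
  have hshift : ∀ t, D (fun i => f i + t) (fun j => g j - t)
      = ρ * ((∑ i, α i) + ∑ j, β j) - ρ * (A * exp (-(t / ρ)) + B * exp (t / ρ)) := by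
    intro t
    simp only [hD, sub_eq_add_neg (g _) t, sum_exp_neg_add_div_sub_one_mul, neg_div ρ t, neg_neg]
    ring
  have hset : {v : ℝ | ∃ t : ℝ, v = D (fun i => f i + t) (fun j => g j - t)}
      = Set.range fun s => ρ * ((∑ i, α i) + ∑ j, β j) - ρ * (A * exp (-s) + B * exp s) := by
    ext v
    constructor
    · rintro ⟨t, rfl⟩
      exact ⟨t / ρ, (hshift t).symm⟩
    · rintro ⟨s, rfl⟩
      exact ⟨ρ * s, by rw [hshift, mul_div_cancel_left₀ _ hρ.ne']⟩
  rw [hset, mul_sub]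
  exact (isGLB_range_mul_exp_neg_add_mul_exp hA hB).isLUB_range_const_sub_mul _ hρ
end

section
/- For the Gaussian-Hellinger setting, define on the cone C[X] = (X × ℝ₊)/∼ the cost d([x,r],[y,s])² = ρ[r² + s² − 2 r s e^{−d_X(x,y)²/(2ρ)}], where (X, d_X) is a metric space and ρ > 0. Then d is a metric on C[X] (where [x,0] ≡ [y,0] for all x,y). -/
open Real

/-- 2D Cauchy–Schwarz. -/
private lemma cs2 (a b c d : ℝ) :
    a * c + b * d ≤ Real.sqrt (a ^ 2 + b ^ 2) * Real.sqrt (c ^ 2 + d ^ 2) := by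
  rcases le_or_gt (a * c + b * d) 0 with h | h
  · exact h.trans (by positivity)
  · have hB := Real.sq_sqrt (show (0:ℝ) ≤ a ^ 2 + b ^ 2 by positivity)
    have hC := Real.sq_sqrt (show (0:ℝ) ≤ c ^ 2 + d ^ 2 by positivity)
    have hprod : (Real.sqrt (a ^ 2 + b ^ 2) * Real.sqrt (c ^ 2 + d ^ 2)) ^ 2
        = (a ^ 2 + b ^ 2) * (c ^ 2 + d ^ 2) := by rw [mul_pow, hB, hC]
    calc a * c + b * d = Real.sqrt ((a * c + b * d) ^ 2) := (Real.sqrt_sq h.le).symm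
      _ ≤ Real.sqrt ((Real.sqrt (a ^ 2 + b ^ 2) * Real.sqrt (c ^ 2 + d ^ 2)) ^ 2) := by
          apply Real.sqrt_le_sqrt
          rw [hprod]
          nlinarith [sq_nonneg (a * d - b * c)]
      _ = _ := Real.sqrt_sq (by positivity)

/-- Planar triangle inequality. -/
private lemma tri2 (a b c d : ℝ) :
    Real.sqrt ((a + c) ^ 2 + (b + d) ^ 2) ≤
      Real.sqrt (a ^ 2 + b ^ 2) + Real.sqrt (c ^ 2 + d ^ 2) := by
  have hcs := cs2 a b c d
  have hB := Real.sq_sqrt (show (0:ℝ) ≤ a ^ 2 + b ^ 2 by positivity)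
  have hC := Real.sq_sqrt (show (0:ℝ) ≤ c ^ 2 + d ^ 2 by positivity)
  calc Real.sqrt ((a + c) ^ 2 + (b + d) ^ 2)
      ≤ Real.sqrt ((Real.sqrt (a ^ 2 + b ^ 2) + Real.sqrt (c ^ 2 + d ^ 2)) ^ 2) := by
        apply Real.sqrt_le_sqrt; nlinarith
    _ = Real.sqrt (a ^ 2 + b ^ 2) + Real.sqrt (c ^ 2 + d ^ 2) :=
        Real.sqrt_sq (by positivity)

/-- Abstract cone triangle inequality. -/
private lemma conetri (ρ r s t k1 k2 k3 s1 s2 : ℝ) (hρ : 0 < ρ)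
    (hr : 0 ≤ r) (ht : 0 ≤ t)
    (hs1sq : s1 ^ 2 = 1 - k1 ^ 2) (hs2sq : s2 ^ 2 = 1 - k2 ^ 2)
    (hkey : k1 * k2 - s1 * s2 ≤ k3) :
    Real.sqrt (ρ * (r ^ 2 + t ^ 2 - 2 * r * t * k3)) ≤
      Real.sqrt (ρ * (r ^ 2 + s ^ 2 - 2 * r * s * k1)) +
      Real.sqrt (ρ * (s ^ 2 + t ^ 2 - 2 * s * t * k2)) := by
  have hB : r ^ 2 + s ^ 2 - 2 * r * s * k1 = (r * k1 - s) ^ 2 + (r * s1) ^ 2 := by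
    linear_combination (-(r ^ 2)) * hs1sq
  have hC : s ^ 2 + t ^ 2 - 2 * s * t * k2 = (s - t * k2) ^ 2 + (t * s2) ^ 2 := by
    linear_combination (-(t ^ 2)) * hs2sq
  have hexpand : ((r * k1 - s) + (s - t * k2)) ^ 2 + ((r * s1) + (t * s2)) ^ 2
      = r ^ 2 + t ^ 2 - 2 * r * t * (k1 * k2 - s1 * s2) := by
    linear_combination r ^ 2 * hs1sq + t ^ 2 * hs2sq
  have hstep : ρ * (r ^ 2 + t ^ 2 - 2 * r * t * k3) ≤
      ρ * (((r * k1 - s) + (s - t * k2)) ^ 2 + ((r * s1) + (t * s2)) ^ 2) := by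
    apply mul_le_mul_of_nonneg_left _ hρ.le
    rw [hexpand]
    nlinarith [mul_le_mul_of_nonneg_left hkey (mul_nonneg hr ht)]
  calc Real.sqrt (ρ * (r ^ 2 + t ^ 2 - 2 * r * t * k3))
      ≤ Real.sqrt (ρ * (((r * k1 - s) + (s - t * k2)) ^ 2 + ((r * s1) + (t * s2)) ^ 2)) :=
        Real.sqrt_le_sqrt hstep
    _ = Real.sqrt ρ * Real.sqrt (((r * k1 - s) + (s - t * k2)) ^ 2
          + ((r * s1) + (t * s2)) ^ 2) := Real.sqrt_mul hρ.le _
    _ ≤ Real.sqrt ρ * (Real.sqrt ((r * k1 - s) ^ 2 + (r * s1) ^ 2)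
          + Real.sqrt ((s - t * k2) ^ 2 + (t * s2) ^ 2)) :=
        mul_le_mul_of_nonneg_left (tri2 _ _ _ _) (Real.sqrt_nonneg _)
    _ = _ := by
        rw [hB, hC, Real.sqrt_mul hρ.le, Real.sqrt_mul hρ.le]
        ring

/-- The key analytic inequality. -/
private lemma key (ρ a b c : ℝ) (hρ : 0 < ρ) (ha : 0 ≤ a) (hb : 0 ≤ b)
    (hc : 0 ≤ c) (htri : c ≤ a + b) :
    Real.exp (-a ^ 2 / (2 * ρ)) * Real.exp (-b ^ 2 / (2 * ρ))
      - Real.sqrt (1 - Real.exp (-a ^ 2 / (2 * ρ)) ^ 2)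
        * Real.sqrt (1 - Real.exp (-b ^ 2 / (2 * ρ)) ^ 2)
      ≤ Real.exp (-c ^ 2 / (2 * ρ)) := by
  set k1 := Real.exp (-a ^ 2 / (2 * ρ)) with hk1
  set k2 := Real.exp (-b ^ 2 / (2 * ρ)) with hk2
  have hk1pos : 0 < k1 := Real.exp_pos _
  have hk2pos : 0 < k2 := Real.exp_pos _
  have hk1le : k1 ≤ 1 := Real.exp_le_one_iff.mpr
    (div_nonpos_of_nonpos_of_nonneg (neg_nonpos.mpr (sq_nonneg a)) (by positivity))
  have hk2le : k2 ≤ 1 := Real.exp_le_one_iff.mpr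
    (div_nonpos_of_nonpos_of_nonneg (neg_nonpos.mpr (sq_nonneg b)) (by positivity))
  -- step 1 : exp(-(a+b)^2/(2ρ)) ≤ exp(-c^2/(2ρ))
  have h3 : Real.exp (-(a + b) ^ 2 / (2 * ρ)) ≤ Real.exp (-c ^ 2 / (2 * ρ)) :=
    Real.exp_le_exp.mpr ((div_le_div_iff_of_pos_right (by positivity)).mpr (by nlinarith))
  refine le_trans ?_ h3
  -- step 2 : exp(-(a+b)^2/(2ρ)) = k1*k2*exp(-(a*b/ρ))
  have hsplit : Real.exp (-(a + b) ^ 2 / (2 * ρ))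
      = k1 * k2 * Real.exp (-(a * b / ρ)) := by
    rw [hk1, hk2, ← Real.exp_add, ← Real.exp_add]
    congr 1
    field_simp
    ring
  rw [hsplit]
  -- bounds : k_i^2 * (x^2/ρ) ≤ 1 - k_i^2
  have hbound1 : k1 ^ 2 * (a ^ 2 / ρ) ≤ 1 - k1 ^ 2 := by
    have he : k1 ^ 2 = Real.exp (-a ^ 2 / ρ) := by
      rw [hk1, pow_two, ← Real.exp_add]
      congr 1
      field_simp
      ring
    have h1 := Real.add_one_le_exp (a ^ 2 / ρ)
    have h2 : Real.exp (-a ^ 2 / ρ) * Real.exp (a ^ 2 / ρ) = 1 := by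
      rw [← Real.exp_add, show -a ^ 2 / ρ + a ^ 2 / ρ = 0 by ring, Real.exp_zero]
    rw [he]
    have hp := Real.exp_pos (-a ^ 2 / ρ)
    nlinarith
  have hbound2 : k2 ^ 2 * (b ^ 2 / ρ) ≤ 1 - k2 ^ 2 := by
    have he : k2 ^ 2 = Real.exp (-b ^ 2 / ρ) := by
      rw [hk2, pow_two, ← Real.exp_add]
      congr 1
      field_simp
      ring
    have h1 := Real.add_one_le_exp (b ^ 2 / ρ)
    have h2 : Real.exp (-b ^ 2 / ρ) * Real.exp (b ^ 2 / ρ) = 1 := by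
      rw [← Real.exp_add, show -b ^ 2 / ρ + b ^ 2 / ρ = 0 by ring, Real.exp_zero]
    rw [he]
    have hp := Real.exp_pos (-b ^ 2 / ρ)
    nlinarith
  clear_value k1 k2
  -- step 3 : s1*s2 ≥ k1*k2*(a*b/ρ)
  have hs : k1 * k2 * (a * b / ρ) ≤
      Real.sqrt (1 - k1 ^ 2) * Real.sqrt (1 - k2 ^ 2) := by
    calc k1 * k2 * (a * b / ρ)
        = Real.sqrt ((k1 * k2 * (a * b / ρ)) ^ 2) :=
          (Real.sqrt_sq (by positivity)).symm
      _ = Real.sqrt ((k1 ^ 2 * (a ^ 2 / ρ)) * (k2 ^ 2 * (b ^ 2 / ρ))) := by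
          congr 1; field_simp
      _ ≤ Real.sqrt ((1 - k1 ^ 2) * (1 - k2 ^ 2)) := by
          apply Real.sqrt_le_sqrt
          exact mul_le_mul hbound1 hbound2 (by positivity) (by nlinarith)
      _ = Real.sqrt (1 - k1 ^ 2) * Real.sqrt (1 - k2 ^ 2) :=
          Real.sqrt_mul (by nlinarith) _
  -- step 4 : 1 - exp(-(a*b/ρ)) ≤ a*b/ρ
  have hexp : 1 - Real.exp (-(a * b / ρ)) ≤ a * b / ρ := by
    have h := Real.add_one_le_exp (-(a * b / ρ))
    linarith
  have hmul := mul_le_mul_of_nonneg_left hexp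
    (show (0:ℝ) ≤ k1 * k2 by positivity)
  nlinarith [hs, hmul]

/-- Gaussian-Hellinger cone metric: on the cone `C[X] = (X × ℝ₊)/∼` (all points of
radius `0` identified to the apex), the cost
`d([x,r],[y,s]) = √(ρ[r² + s² − 2 r s e^{−d_X(x,y)²/(2ρ)}])` is a metric: it is
nonnegative, symmetric, vanishes exactly on equivalent points, and satisfies the
triangle inequality. -/
theorem gaussian_hellinger_cone_metric
    {X : Type*} [MetricSpace X] (ρ : ℝ) (hρ : 0 < ρ)
    (d : X × ℝ → X × ℝ → ℝ)
    (hd : ∀ p q : X × ℝ, d p q =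
      Real.sqrt (ρ * (p.2 ^ 2 + q.2 ^ 2
        - 2 * p.2 * q.2 * Real.exp (-(dist p.1 q.1) ^ 2 / (2 * ρ))))) :
    (∀ p q : X × ℝ, 0 ≤ p.2 → 0 ≤ q.2 → 0 ≤ d p q) ∧
    (∀ p q : X × ℝ, d p q = d q p) ∧
    (∀ p q : X × ℝ, 0 ≤ p.2 → 0 ≤ q.2 →
      (d p q = 0 ↔ p = q ∨ (p.2 = 0 ∧ q.2 = 0))) ∧
    (∀ p q r : X × ℝ, 0 ≤ p.2 → 0 ≤ q.2 → 0 ≤ r.2 →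
      d p r ≤ d p q + d q r) := by
  refine ⟨?_, ?_, ?_, ?_⟩
  · intro p q _ _
    rw [hd]
    exact Real.sqrt_nonneg _
  · intro p q
    rw [hd, hd, dist_comm]
    ring_nf
  · intro p q hp hq
    set k := Real.exp (-(dist p.1 q.1) ^ 2 / (2 * ρ)) with hk
    have hkpos : 0 < k := Real.exp_pos _
    have hk1 : k ≤ 1 := Real.exp_le_one_iff.mpr
      (div_nonpos_of_nonpos_of_nonneg (neg_nonpos.mpr (sq_nonneg _)) (by positivity))
    have hE : 0 ≤ p.2 ^ 2 + q.2 ^ 2 - 2 * p.2 * q.2 * k := by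
      nlinarith [sq_nonneg (p.2 - q.2), mul_nonneg (mul_nonneg hp hq) (sub_nonneg.mpr hk1)]
    constructor
    · intro h
      rw [hd] at h
      have h0 : ρ * (p.2 ^ 2 + q.2 ^ 2 - 2 * p.2 * q.2 * k) ≤ 0 :=
        Real.sqrt_eq_zero'.mp h
      have hE0 : p.2 ^ 2 + q.2 ^ 2 - 2 * p.2 * q.2 * k = 0 := by nlinarith
      have hr : p.2 = q.2 := by
        nlinarith [sq_nonneg (p.2 - q.2), mul_nonneg (mul_nonneg hp hq) (sub_nonneg.mpr hk1)]
      rcases eq_or_lt_of_le hp with h2 | h2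
      · right; exact ⟨h2.symm, by rw [← hr, ← h2]⟩
      · left
        have hq2 : 0 < q.2 := hr ▸ h2
        have hk1' : 1 ≤ k := by
          nlinarith [sq_nonneg (p.2 - q.2), mul_pos h2 hq2]
        have hku : k = 1 := le_antisymm hk1 hk1'
        have hexp0 : Real.exp (-dist p.1 q.1 ^ 2 / (2 * ρ)) = Real.exp 0 := by
          rw [Real.exp_zero, ← hk, hku]
        have h0' : -dist p.1 q.1 ^ 2 / (2 * ρ) = 0 := Real.exp_eq_exp.mp hexp0
        have hsq : dist p.1 q.1 ^ 2 = 0 := by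
          field_simp at h0'
          simpa using h0'
        have hdist : dist p.1 q.1 = 0 :=
          pow_eq_zero_iff (n := 2) (by norm_num) |>.mp hsq
        exact Prod.ext (dist_eq_zero.mp hdist) hr
    · intro h
      rcases h with h | ⟨h1, h2⟩
      · subst h
        have e1 : Real.exp (-dist p.1 p.1 ^ 2 / (2 * ρ)) = 1 := by
          simp [dist_self]
        rw [hd, e1, show ρ * (p.2 ^ 2 + p.2 ^ 2 - 2 * p.2 * p.2 * 1) = 0 by ring,
          Real.sqrt_zero]
      · rw [hd, h1, h2,
          show ρ * ((0:ℝ) ^ 2 + 0 ^ 2 - 2 * 0 * 0 *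
            Real.exp (-(dist p.1 q.1) ^ 2 / (2 * ρ))) = 0 by ring, Real.sqrt_zero]
  · intro p q r hp hq hr
    have hk1le : Real.exp (-dist p.1 q.1 ^ 2 / (2 * ρ)) ≤ 1 := Real.exp_le_one_iff.mpr
      (div_nonpos_of_nonpos_of_nonneg (neg_nonpos.mpr (sq_nonneg _)) (by positivity))
    have hk2le : Real.exp (-dist q.1 r.1 ^ 2 / (2 * ρ)) ≤ 1 := Real.exp_le_one_iff.mpr
      (div_nonpos_of_nonpos_of_nonneg (neg_nonpos.mpr (sq_nonneg _)) (by positivity))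
    have hk1pos : 0 < Real.exp (-dist p.1 q.1 ^ 2 / (2 * ρ)) := Real.exp_pos _
    have hk2pos : 0 < Real.exp (-dist q.1 r.1 ^ 2 / (2 * ρ)) := Real.exp_pos _
    rw [hd p r, hd p q, hd q r]
    exact conetri ρ p.2 q.2 r.2 _ _ _ _ _ hρ hp hr
      (Real.sq_sqrt (by nlinarith)) (Real.sq_sqrt (by nlinarith))
      (key ρ (dist p.1 q.1) (dist q.1 r.1) (dist p.1 r.1) hρ
        dist_nonneg dist_nonneg dist_nonneg (dist_triangle _ _ _))
end

section
/- For the partial transport setting with q ≥ 1 and ρ > 0, the cone cost d([x,r],[y,s])^q = ρ[ r + s − min(r,s)·(2 − d_X(x,y)^q/ρ)₊ ] defines a metric d on the cone C[X] over a metric space (X, d_X), where (t)₊ = max(t, 0). -/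
open Real

section Aux

/-- superadditivity of `x ^ q` for `q ≥ 1`. -/
lemma aux_superadd {x y q : ℝ} (hx : 0 ≤ x) (hy : 0 ≤ y) (hq : 1 ≤ q) :
    x ^ q + y ^ q ≤ (x + y) ^ q := by
  have h := NNReal.add_rpow_le_rpow_add x.toNNReal y.toNNReal hq
  have h' := NNReal.coe_le_coe.2 h
  push_cast at h'
  rwa [Real.coe_toNNReal x hx, Real.coe_toNNReal y hy] at h'

/-- Rewrite the cone cost in the convenient form. -/
lemma aux_cost_eq {ρ D : ℝ} (hρ : 0 < ρ) (hD : 0 ≤ D) (r s : ℝ) :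
    ρ * (r + s - min r s * max (2 - D / ρ) 0)
      = ρ * |r - s| + min r s * min D (2 * ρ) := by
  have hρ' : ρ ≠ 0 := hρ.ne'
  have hmax : max (2 - D / ρ) 0 = (2 * ρ - min D (2 * ρ)) / ρ := by
    rcases le_total D (2 * ρ) with h | h
    · rw [min_eq_left h, max_eq_left (by rw [sub_nonneg]; rw [div_le_iff₀ hρ]; linarith)]
      field_simp
    · rw [min_eq_right h, max_eq_right (by rw [sub_nonpos, le_div_iff₀ hρ]; linarith)]
      simp
  rw [hmax]
  have habs : |r - s| = r + s - 2 * min r s := by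
    rcases le_total r s with h | h
    · rw [min_eq_left h, abs_of_nonpos (by linarith)]; ring
    · rw [min_eq_right h, abs_of_nonneg (by linarith)]; ring
  rw [habs]
  field_simp
  ring

/-- The two-point Minkowski step. -/
lemma aux_mink {q ρ m A B u v : ℝ} (hq : 1 ≤ q) (hρ : 0 ≤ ρ) (hm : 0 ≤ m)
    (hA : 0 ≤ A) (hB : 0 ≤ B) (hu : 0 ≤ u) (hv : 0 ≤ v) :
    (ρ * (A + B) + m * (u + v) ^ q) ^ (1 / q)
      ≤ (ρ * A + m * u ^ q) ^ (1 / q) + (ρ * B + m * v ^ q) ^ (1 / q) := by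
  have hq0 : (0:ℝ) < q := lt_of_lt_of_le zero_lt_one hq
  have hqne : q ≠ 0 := hq0.ne'
  set f : Fin 2 → ℝ := ![(ρ * A) ^ (1 / q), m ^ (1 / q) * u] with hf
  set g : Fin 2 → ℝ := ![(ρ * B) ^ (1 / q), m ^ (1 / q) * v] with hg
  have hf0 : ∀ i ∈ (Finset.univ : Finset (Fin 2)), 0 ≤ f i := by
    intro i _
    fin_cases i
    · exact Real.rpow_nonneg (mul_nonneg hρ hA) _
    · exact mul_nonneg (Real.rpow_nonneg hm _) hu
  have hg0 : ∀ i ∈ (Finset.univ : Finset (Fin 2)), 0 ≤ g i := by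
    intro i _
    fin_cases i
    · exact Real.rpow_nonneg (mul_nonneg hρ hB) _
    · exact mul_nonneg (Real.rpow_nonneg hm _) hv
  have hmink := Real.Lp_add_le_of_nonneg (s := Finset.univ) (f := f) (g := g) hq hf0 hg0
  have hinv : ∀ x : ℝ, 0 ≤ x → (x ^ (1/q)) ^ q = x := by
    intro x hx
    rw [one_div, Real.rpow_inv_rpow hx hqne]
  have hmq : (m ^ (1/q)) ^ q = m := hinv m hm
  have hsumf : ∑ i, f i ^ q = ρ * A + m * u ^ q := by
    rw [Fin.sum_univ_two]
    simp only [hf, Matrix.cons_val_zero, Matrix.cons_val_one, Matrix.head_cons]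
    rw [hinv _ (mul_nonneg hρ hA), Real.mul_rpow (Real.rpow_nonneg hm _) hu, hmq]
  have hsumg : ∑ i, g i ^ q = ρ * B + m * v ^ q := by
    rw [Fin.sum_univ_two]
    simp only [hg, Matrix.cons_val_zero, Matrix.cons_val_one, Matrix.head_cons]
    rw [hinv _ (mul_nonneg hρ hB), Real.mul_rpow (Real.rpow_nonneg hm _) hv, hmq]
  have hsumfg : ρ * (A + B) + m * (u + v) ^ q ≤ ∑ i, (f i + g i) ^ q := by
    rw [Fin.sum_univ_two]
    simp only [hf, hg, Matrix.cons_val_zero, Matrix.cons_val_one, Matrix.head_cons]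
    have h1 : ρ * A + ρ * B ≤ ((ρ * A) ^ (1/q) + (ρ * B) ^ (1/q)) ^ q := by
      have := aux_superadd (Real.rpow_nonneg (mul_nonneg hρ hA) (1/q))
        (Real.rpow_nonneg (mul_nonneg hρ hB) (1/q)) hq
      rwa [hinv _ (mul_nonneg hρ hA), hinv _ (mul_nonneg hρ hB)] at this
    have h2 : (m ^ (1/q) * u + m ^ (1/q) * v) ^ q = m * (u + v) ^ q := by
      rw [← mul_add, Real.mul_rpow (Real.rpow_nonneg hm _) (add_nonneg hu hv), hmq]
    rw [h2]
    linarith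
  rw [hsumf, hsumg] at hmink
  calc (ρ * (A + B) + m * (u + v) ^ q) ^ (1 / q)
      ≤ (∑ i, (f i + g i) ^ q) ^ (1 / q) := by
        apply Real.rpow_le_rpow _ hsumfg (by positivity)
        have : 0 ≤ m * (u + v) ^ q := mul_nonneg hm (Real.rpow_nonneg (add_nonneg hu hv) _)
        nlinarith [mul_nonneg hρ (add_nonneg hA hB)]
    _ ≤ (ρ * A + m * u ^ q) ^ (1 / q) + (ρ * B + m * v ^ q) ^ (1 / q) := hmink

end Aux

/-- Partial-transport cone metric: for `q ≥ 1` and `ρ > 0`, the cost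
`d([x,r],[y,s]) = (ρ[r + s − min(r,s)(2 − d_X(x,y)^q/ρ)₊])^{1/q}` is a metric on the
cone `C[X] = (X × ℝ₊)/∼` (all radius-0 points identified to the apex): it is
nonnegative, symmetric, vanishes exactly on equivalent points, and satisfies the
triangle inequality. -/
theorem partial_transport_cone_metric
    {X : Type*} [MetricSpace X] (ρ q : ℝ) (hρ : 0 < ρ) (hq : 1 ≤ q)
    (d : X × ℝ → X × ℝ → ℝ)
    (hd : ∀ p p' : X × ℝ, d p p' =
      (ρ * (p.2 + p'.2
        - min p.2 p'.2 * max (2 - (dist p.1 p'.1) ^ q / ρ) 0)) ^ (1 / q)) :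
    (∀ p p' : X × ℝ, 0 ≤ p.2 → 0 ≤ p'.2 → 0 ≤ d p p') ∧
    (∀ p p' : X × ℝ, d p p' = d p' p) ∧
    (∀ p p' : X × ℝ, 0 ≤ p.2 → 0 ≤ p'.2 →
      (d p p' = 0 ↔ p = p' ∨ (p.2 = 0 ∧ p'.2 = 0))) ∧
    (∀ p p' p'' : X × ℝ, 0 ≤ p.2 → 0 ≤ p'.2 → 0 ≤ p''.2 →
      d p p'' ≤ d p p' + d p' p'') := by
  have hq0 : (0:ℝ) < q := lt_of_lt_of_le zero_lt_one hq
  have hqne : q ≠ 0 := hq0.ne'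
  have hDnn : ∀ x y : X, (0:ℝ) ≤ dist x y ^ q := fun x y => Real.rpow_nonneg dist_nonneg q
  have key : ∀ p p' : X × ℝ, d p p' =
      (ρ * |p.2 - p'.2| + min p.2 p'.2 * min (dist p.1 p'.1 ^ q) (2 * ρ)) ^ (1 / q) := by
    intro p p'
    rw [hd, aux_cost_eq hρ (hDnn p.1 p'.1)]
  have costnn : ∀ p p' : X × ℝ, 0 ≤ p.2 → 0 ≤ p'.2 →
      0 ≤ ρ * |p.2 - p'.2| + min p.2 p'.2 * min (dist p.1 p'.1 ^ q) (2 * ρ) := by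
    intro p p' h1 h2
    have := hDnn p.1 p'.1
    have : (0:ℝ) ≤ min (dist p.1 p'.1 ^ q) (2 * ρ) := le_min this (by linarith)
    have hm : (0:ℝ) ≤ min p.2 p'.2 := le_min h1 h2
    positivity
  refine ⟨?_, ?_, ?_, ?_⟩
  · intro p p' h1 h2
    rw [key]
    exact Real.rpow_nonneg (costnn p p' h1 h2) _
  · intro p p'
    rw [hd, hd, dist_comm p.1 p'.1, min_comm p.2 p'.2, add_comm p.2 p'.2]
  · intro p p' h1 h2
    rw [key, Real.rpow_eq_zero_iff_of_nonneg (costnn p p' h1 h2)]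
    have h1q : 1 / q ≠ 0 := by positivity
    simp only [h1q, ne_eq, not_false_eq_true, and_true]
    have hmnn : (0:ℝ) ≤ min p.2 p'.2 := le_min h1 h2
    have hminD : (0:ℝ) ≤ min (dist p.1 p'.1 ^ q) (2 * ρ) := le_min (hDnn _ _) (by linarith)
    constructor
    · intro h
      have habs : ρ * |p.2 - p'.2| = 0 ∧ min p.2 p'.2 * min (dist p.1 p'.1 ^ q) (2 * ρ) = 0 := by
        constructor <;> nlinarith [abs_nonneg (p.2 - p'.2), mul_nonneg hmnn hminD,
          mul_nonneg hρ.le (abs_nonneg (p.2 - p'.2))]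
      have h22 : p.2 = p'.2 := by
        have := habs.1
        have : |p.2 - p'.2| = 0 := by
          rcases mul_eq_zero.1 this with h | h
          · exact absurd h hρ.ne'
          · exact h
        have := abs_eq_zero.1 this
        linarith
      rcases mul_eq_zero.1 habs.2 with hm | hD
      · right
        constructor
        · rcases le_total p.2 p'.2 with h | h
          · rwa [min_eq_left h] at hm
          · rw [min_eq_right h] at hm; linarith
        · rcases le_total p.2 p'.2 with h | h
          · rw [min_eq_left h] at hm; linarith
          · rwa [min_eq_right h] at hm
      · left
        have hdist : dist p.1 p'.1 ^ q = 0 := by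
          rcases le_total (dist p.1 p'.1 ^ q) (2 * ρ) with h | h
          · rwa [min_eq_left h] at hD
          · rw [min_eq_right h] at hD; linarith
        have : dist p.1 p'.1 = 0 :=
          ((Real.rpow_eq_zero_iff_of_nonneg dist_nonneg).1 hdist).1
        have hx : p.1 = p'.1 := dist_eq_zero.1 this
        exact Prod.ext hx h22
    · intro h
      rcases h with h | h
      · subst h
        simp only [sub_self, abs_zero, mul_zero, dist_self, min_self]
        rw [Real.zero_rpow hqne, min_eq_left (by linarith : (0:ℝ) ≤ 2 * ρ)]
        simp [Real.zero_rpow h1q]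
      · rw [h.1, h.2]
        simp
  · -- triangle inequality
    intro p p' p'' h1 h2 h3
    rw [key, key, key]
    set r := p.2
    set s := p'.2
    set t := p''.2
    set x := p.1
    set y := p'.1
    set z := p''.1
    set c : ℝ := (2 * ρ) ^ (1 / q) with hc
    have hcnn : 0 ≤ c := Real.rpow_nonneg (by linarith) _
    have hcq : c ^ q = 2 * ρ := by
      rw [hc, one_div, Real.rpow_inv_rpow (by linarith) hqne]
    have htrunc : ∀ a : X, ∀ b : X,
        min (dist a b ^ q) (2 * ρ) = (min (dist a b) c) ^ q := by
      intro a b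
      rcases le_total (dist a b) c with h | h
      · rw [min_eq_left h, min_eq_left]
        rw [← hcq]
        exact Real.rpow_le_rpow dist_nonneg h hq0.le
      · rw [min_eq_right h, min_eq_right, hcq]
        rw [← hcq]
        exact Real.rpow_le_rpow hcnn h hq0.le
    rw [htrunc x y, htrunc y z, htrunc x z]
    set u := min (dist x y) c with hu
    set v := min (dist y z) c with hv
    set w := min (dist x z) c with hw
    have hu0 : 0 ≤ u := le_min dist_nonneg hcnn
    have hv0 : 0 ≤ v := le_min dist_nonneg hcnn
    have hw0 : 0 ≤ w := le_min dist_nonneg hcnn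
    have hwuv : w ≤ u + v := by
      rcases le_total (dist x y) c with h | h
      · rcases le_total (dist y z) c with h' | h'
        · calc w ≤ dist x z := min_le_left _ _
            _ ≤ dist x y + dist y z := dist_triangle x y z
            _ = u + v := by rw [hu, hv, min_eq_left h, min_eq_left h']
        · calc w ≤ c := min_le_right _ _
            _ = 0 + v := by rw [hv, min_eq_right h']; ring
            _ ≤ u + v := by linarith
      · calc w ≤ c := min_le_right _ _
          _ = u + 0 := by rw [hu, min_eq_right h]; ring
          _ ≤ u + v := by linarith
    have hW2ρ : w ^ q ≤ 2 * ρ := by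
      rw [← hcq]; exact Real.rpow_le_rpow hw0 (min_le_right _ _) hq0.le
    have hWS : w ^ q ≤ (u + v) ^ q := Real.rpow_le_rpow hw0 hwuv hq0.le
    have hS0 : 0 ≤ (u + v) ^ q := Real.rpow_nonneg (add_nonneg hu0 hv0) _
    set m : ℝ := min r (min s t) with hm
    have hm0 : 0 ≤ m := le_min h1 (le_min h2 h3)
    have hmrs : m ≤ min r s := le_min (min_le_left _ _)
      (le_trans (min_le_right _ _) (min_le_left _ _))
    have hmst : m ≤ min s t := min_le_right _ _
    -- master inequality
    have master : ρ * |r - t| + min r t * w ^ q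
        ≤ ρ * (|r - s| + |s - t|) + m * (u + v) ^ q := by
      rcases le_total s (min r t) with hs | hs
      · have hsr : s ≤ r := le_trans hs (min_le_left _ _)
        have hst : s ≤ t := le_trans hs (min_le_right _ _)
        have hmeq : m = s := by
          rw [hm, min_eq_left hst, min_eq_right hsr]
        rw [hmeq, abs_of_nonneg (by linarith : (0:ℝ) ≤ r - s),
          abs_of_nonpos (by linarith : s - t ≤ 0)]
        rcases le_total r t with hrt | hrt
        · rw [min_eq_left hrt, abs_of_nonpos (by linarith : r - t ≤ 0)]
          have hA1 : s * (w ^ q) ≤ s * ((u + v) ^ q) :=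
            mul_le_mul_of_nonneg_left hWS h2
          have hA2 : (r - s) * (w ^ q) ≤ (r - s) * (2 * ρ) :=
            mul_le_mul_of_nonneg_left hW2ρ (by linarith)
          nlinarith
        · rw [min_eq_right hrt, abs_of_nonneg (by linarith : (0:ℝ) ≤ r - t)]
          have hA1 : s * (w ^ q) ≤ s * ((u + v) ^ q) :=
            mul_le_mul_of_nonneg_left hWS h2
          have hA2 : (t - s) * (w ^ q) ≤ (t - s) * (2 * ρ) :=
            mul_le_mul_of_nonneg_left hW2ρ (by linarith)
          nlinarith
      · have hmm : min r t ≤ m := by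
          rw [hm]
          exact le_min (min_le_left _ _) (le_min hs (min_le_right _ _))
        have hminrt0 : 0 ≤ min r t := le_min h1 h3
        have hA1 : min r t * w ^ q ≤ m * (u + v) ^ q :=
          le_trans (mul_le_mul_of_nonneg_left hWS hminrt0)
            (mul_le_mul_of_nonneg_right hmm hS0)
        have hA2 : ρ * |r - t| ≤ ρ * (|r - s| + |s - t|) :=
          mul_le_mul_of_nonneg_left (abs_sub_le r s t) hρ.le
        linarith
    have huq0 : 0 ≤ u ^ q := Real.rpow_nonneg hu0 _
    have hvq0 : 0 ≤ v ^ q := Real.rpow_nonneg hv0 _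
    calc (ρ * |r - t| + min r t * w ^ q) ^ (1 / q)
        ≤ (ρ * (|r - s| + |s - t|) + m * (u + v) ^ q) ^ (1 / q) := by
          apply Real.rpow_le_rpow _ master (by positivity)
          have hminrt0 : 0 ≤ min r t := le_min h1 h3
          have : 0 ≤ min r t * w ^ q := mul_nonneg hminrt0 (Real.rpow_nonneg hw0 _)
          have : 0 ≤ ρ * |r - t| := mul_nonneg hρ.le (abs_nonneg _)
          linarith [mul_nonneg (le_min h1 h3) (Real.rpow_nonneg hw0 q)]
      _ ≤ (ρ * |r - s| + m * u ^ q) ^ (1 / q) + (ρ * |s - t| + m * v ^ q) ^ (1 / q) :=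
          aux_mink hq hρ.le hm0 (abs_nonneg _) (abs_nonneg _) hu0 hv0
      _ ≤ (ρ * |r - s| + min r s * u ^ q) ^ (1 / q)
            + (ρ * |s - t| + min s t * v ^ q) ^ (1 / q) := by
          have e1 : 0 ≤ ρ * |r - s| + m * u ^ q :=
            add_nonneg (mul_nonneg hρ.le (abs_nonneg _)) (mul_nonneg hm0 huq0)
          have e2 : 0 ≤ ρ * |s - t| + m * v ^ q :=
            add_nonneg (mul_nonneg hρ.le (abs_nonneg _)) (mul_nonneg hm0 hvq0)
          apply add_le_add
          · exact Real.rpow_le_rpow e1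
              (add_le_add_right (mul_le_mul_of_nonneg_right hmrs huq0) _) (by positivity)
          · exact Real.rpow_le_rpow e2
              (add_le_add_right (mul_le_mul_of_nonneg_right hmst hvq0) _) (by positivity)
end

section
/- For discrete measures α ∈ ℝ₊ᴺ, β ∈ ℝ₊ᴹ with KL marginal penalties ρ·KL on both marginals, one Sinkhorn iteration f ↦ AS_β∘AS_α(f) (where AS_α(f) = −(1+ε/ρ)^{-1}·Softmin_α^ε(C(·,y) − f) and similarly for AS_β) is a contraction with rate κ = (1 + ε/ρ₁)^{-1}(1 + ε/ρ₂)^{-1} for the sup-norm: ‖AS_β∘AS_α(f) − AS_β∘AS_α(f')‖_∞ ≤ κ‖f − f'‖_∞. -/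
open Real Finset

private lemma softmin_one_side {n : ℕ} (w c f f' : Fin n → ℝ) (hw : ∀ i, 0 < w i)
    (ε : ℝ) (hε : 0 < ε) (d : ℝ) (hd : 0 ≤ d) (h : ∀ i, f' i ≤ f i + d) :
    (-ε * Real.log (∑ i, w i * Real.exp ((f i - c i) / ε))) -
      (-ε * Real.log (∑ i, w i * Real.exp ((f' i - c i) / ε))) ≤ d := by
  rcases isEmpty_or_nonempty (Fin n) with hn | hn
  · simp [hd]
  · set A := ∑ i, w i * Real.exp ((f i - c i) / ε) with hA
    set A' := ∑ i, w i * Real.exp ((f' i - c i) / ε) with hA'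
    have hApos : 0 < A :=
      Finset.sum_pos (fun i _ => mul_pos (hw i) (Real.exp_pos _)) Finset.univ_nonempty
    have hbound : A' ≤ Real.exp (d / ε) * A := by
      rw [hA', hA, Finset.mul_sum]
      refine Finset.sum_le_sum fun i _ => ?_
      rw [mul_left_comm]
      refine mul_le_mul_of_nonneg_left ?_ (hw i).le
      rw [← Real.exp_add, ← add_div]
      exact Real.exp_le_exp.mpr (by gcongr; linarith [h i])
    have hlog : Real.log A' ≤ d / ε + Real.log A := by
      calc Real.log A' ≤ Real.log (Real.exp (d / ε) * A) := by
            apply Real.log_le_log _ hbound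
            exact Finset.sum_pos (fun i _ => mul_pos (hw i) (Real.exp_pos _))
              Finset.univ_nonempty
        _ = d / ε + Real.log A := by
            rw [Real.log_mul (Real.exp_ne_zero _) hApos.ne', Real.log_exp]
    have : ε * Real.log A' ≤ d + ε * Real.log A := by
      have := mul_le_mul_of_nonneg_left hlog hε.le
      rw [mul_add, mul_div_cancel₀ _ hε.ne'] at this
      linarith
    linarith

private lemma softmin_lip {n : ℕ} (w c f f' : Fin n → ℝ) (hw : ∀ i, 0 < w i)
    (ε : ℝ) (hε : 0 < ε) (d : ℝ) (hd : 0 ≤ d) (h : ∀ i, |f i - f' i| ≤ d) :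
    |(-ε * Real.log (∑ i, w i * Real.exp ((f i - c i) / ε))) -
      (-ε * Real.log (∑ i, w i * Real.exp ((f' i - c i) / ε)))| ≤ d := by
  rw [abs_sub_le_iff]
  constructor
  · exact softmin_one_side w c f f' hw ε hε d hd
      (fun i => by have := abs_le.mp (h i); linarith [this.2])
  · exact softmin_one_side w c f' f hw ε hε d hd
      (fun i => by have := abs_le.mp (h i); linarith [this.1])

/-- Contraction of the unbalanced Sinkhorn iteration with KL penalties: with
`S_α(f)(y) = −ε log Σᵢ αᵢ e^{(fᵢ − C(xᵢ,y))/ε}` and updates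
`g = (1+ε/ρ₂)⁻¹ S_α(f)`, `f' = (1+ε/ρ₁)⁻¹ S_β(g)`, the composed map is a contraction
of rate `κ = (1+ε/ρ₁)⁻¹(1+ε/ρ₂)⁻¹` for the sup-norm (the norm on `Fin N → ℝ`). -/
theorem sinkhorn_KL_contraction
    {N M : ℕ} (α : Fin N → ℝ) (β : Fin M → ℝ)
    (hα : ∀ i, 0 < α i) (hβ : ∀ j, 0 < β j)
    (C : Fin N → Fin M → ℝ)
    (ε ρ₁ ρ₂ : ℝ) (hε : 0 < ε) (hρ₁ : 0 < ρ₁) (hρ₂ : 0 < ρ₂)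
    (Sa : (Fin N → ℝ) → (Fin M → ℝ)) (Sb : (Fin M → ℝ) → (Fin N → ℝ))
    (hSa : ∀ f j, Sa f j = -ε * Real.log (∑ i, α i * Real.exp ((f i - C i j) / ε)))
    (hSb : ∀ g i, Sb g i = -ε * Real.log (∑ j, β j * Real.exp ((g j - C i j) / ε)))
    (T : (Fin N → ℝ) → (Fin N → ℝ))
    (hT : ∀ f, T f = fun i => (1 + ε / ρ₁)⁻¹ * Sb (fun j => (1 + ε / ρ₂)⁻¹ * Sa f j) i) :
    ∀ f f' : Fin N → ℝ,
      ‖T f - T f'‖ ≤ (1 + ε / ρ₁)⁻¹ * (1 + ε / ρ₂)⁻¹ * ‖f - f'‖ := by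
  intro f f'
  set c₁ := (1 + ε / ρ₁)⁻¹ with hc₁
  set c₂ := (1 + ε / ρ₂)⁻¹ with hc₂
  have hc₁0 : 0 ≤ c₁ := inv_nonneg.mpr (by positivity)
  have hc₂0 : 0 ≤ c₂ := inv_nonneg.mpr (by positivity)
  set d := ‖f - f'‖ with hd
  have hd0 : 0 ≤ d := norm_nonneg _
  have hdf : ∀ i, |f i - f' i| ≤ d := fun i => by
    have := norm_le_pi_norm (f - f') i
    simpa [Real.norm_eq_abs] using this
  -- Sa is 1-Lipschitz coordinatewise
  have hSaLip : ∀ j, |Sa f j - Sa f' j| ≤ d := fun j => by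
    rw [hSa, hSa]
    exact softmin_lip α (fun i => C i j) f f' hα ε hε d hd0 hdf
  -- the g's
  set g := fun j => c₂ * Sa f j with hg
  set g' := fun j => c₂ * Sa f' j with hg'
  have hgLip : ∀ j, |g j - g' j| ≤ c₂ * d := fun j => by
    rw [hg, hg']
    rw [← mul_sub, abs_mul, abs_of_nonneg hc₂0]
    exact mul_le_mul_of_nonneg_left (hSaLip j) hc₂0
  have hSbLip : ∀ i, |Sb g i - Sb g' i| ≤ c₂ * d := fun i => by
    rw [hSb, hSb]
    exact softmin_lip β (fun j => C i j) g g' hβ ε hε (c₂ * d)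
      (mul_nonneg hc₂0 hd0) hgLip
  have key : ∀ i, |T f i - T f' i| ≤ c₁ * (c₂ * d) := fun i => by
    rw [hT, hT]
    simp only
    rw [← mul_sub, abs_mul, abs_of_nonneg hc₁0]
    exact mul_le_mul_of_nonneg_left (hSbLip i) hc₁0
  have : ‖T f - T f'‖ ≤ c₁ * (c₂ * d) := by
    apply pi_norm_le_iff_of_nonneg (by positivity) |>.mpr
    intro i
    simpa [Real.norm_eq_abs] using key i
  linarith [this]
end
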